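/- Let Γ(n,d) be the graph with vertex set H_n and edges {(x,y) : 0 < d_H(x,y) < d}, and let ϑ'(Γ(n,d)) be the modified Lovász theta number in which feasible matrices are additionally required to have nonnegative entries. Then ϑ'(Γ(n,d)) equals the optimal value of Delsarte's linear program: max{ Σ_{i=0}^n y_i : y_i ≥ 0, y_0 = 1, y_i = 0 for i = 1,…,d−1, Σ_{i=0}^n K_k^n(i) y_i ≥ 0 for all 0 ≤ k ≤ n }. -/

import Mathlib

open Finset

/-- The Krawtchouk polynomial `K_k^n(t) = ∑_{j=0}^k (−1)^j C(t,j) C(n−t,k−j)`,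
evaluated at a natural number `t`. -/
def krawtchouk (n k t : ℕ) : ℝ :=
  ∑ j ∈ Finset.range (k + 1),
    (-1 : ℝ) ^ j * (Nat.choose t j : ℝ) * (Nat.choose (n - t) (k - j) : ℝ)

/-- The graph `Γ(n,d)` on the binary Hamming space `H_n = 𝔽₂ⁿ`, where two words are
adjacent when `0 < d_H(x,y) < d`. -/
def hammingGraph (n d : ℕ) : SimpleGraph (Fin n → ZMod 2) where
  Adj x y := 0 < hammingDist x y ∧ hammingDist x y < d
  symm := by
    constructor
    intro x y h
    rwa [hammingDist_comm]
  loopless := by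
    constructor
    intro x h
    simp [hammingDist_self] at h

/-- The modified Lovász theta number `ϑ'` of a finite graph, in which the feasible
matrices are additionally required to have nonnegative entries. -/
noncomputable def lovaszThetaPrime {V : Type*} [Fintype V] (G : SimpleGraph V) : ℝ :=
  sSup {s | ∃ B : Matrix V V ℝ, B.PosSemidef ∧ (∀ i j, 0 ≤ B i j) ∧
    (∑ i, B i i) = 1 ∧ (∀ i j, G.Adj i j → B i j = 0) ∧ s = ∑ i, ∑ j, B i j}

/-- The optimal value of Delsarte's linear program for parameters `n, d`. -/
noncomputable def delsarteLP (n d : ℕ) : ℝ :=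
  sSup {s | ∃ y : ℕ → ℝ,
    (∀ i, 0 ≤ y i) ∧
    y 0 = 1 ∧
    (∀ i, 1 ≤ i → i ≤ d - 1 → y i = 0) ∧
    (∀ k ≤ n, 0 ≤ ∑ i ∈ Finset.range (n + 1), krawtchouk n k i * y i) ∧
    s = ∑ i ∈ Finset.range (n + 1), y i}

/-!
Both optimisation problems have the same set of feasible values. Write `χ_u(v) = (-1)^{u·v}`
for the Walsh characters of `𝔽₂ⁿ`. Comparing coefficients in the generating function
`∑_u χ_u(v) X^{|u|} = (1 - X)^{|v|} (1 + X)^{n - |v|}` gives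
`K_k(d(x,z)) = ∑_{|u| = k} χ_u(x) χ_u(z)`, and double counting gives the reciprocity
`C(n,k) K_i(k) = C(n,i) K_k(i)`.

A feasible matrix `B` yields its distance distribution `y_i = ∑_{d(x,z) = i} B(x,z)`, whose
`k`-th Delsarte sum is `∑_{|u| = k} χ_uᵀ B χ_u ≥ 0`. Conversely, a feasible `y` yields the
translation-invariant matrix `B(x,z) = y_i / (2ⁿ C(n,i))` for `d(x,z) = i`; by reciprocity its
Fourier coefficients are positive multiples of the Delsarte sums, hence nonnegative, and a
translation-invariant kernel with nonnegative Fourier coefficients is positive semidefinite.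
-/

open Polynomial

section HammingSpace

variable {n : ℕ}

noncomputable def signChar : AddChar (ZMod 2) ℝ :=
  AddChar.zmodChar 2 (by norm_num : (-1 : ℝ) ^ 2 = 1)

lemma signChar_apply (a : ZMod 2) : signChar a = (-1) ^ a.val := rfl

noncomputable def walsh (u : Fin n → ZMod 2) : AddChar (Fin n → ZMod 2) ℝ where
  toFun v := ∏ j, signChar (u j * v j)
  map_zero_eq_one' := by simp
  map_add_eq_mul' x y := by
    simp only [Pi.add_apply, mul_add, AddChar.map_add_eq_mul, prod_mul_distrib]

lemma walsh_apply (u v : Fin n → ZMod 2) : walsh u v = ∏ j, signChar (u j * v j) := rfl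

lemma walsh_comm (u v : Fin n → ZMod 2) : walsh u v = walsh v u := by
  simp only [walsh_apply, mul_comm]

lemma walsh_sub (u x z : Fin n → ZMod 2) : walsh u (x - z) = walsh u x * walsh u z := by
  rw [ZModModule.sub_eq_add, AddChar.map_add_eq_mul]

lemma walsh_zero_left (v : Fin n → ZMod 2) : walsh 0 v = 1 := by
  simp [walsh_apply]

lemma walsh_ne_one {u : Fin n → ZMod 2} (hu : u ≠ 0) : walsh u ≠ 1 := by
  obtain ⟨j, hj⟩ := Function.ne_iff.mp hu
  have huj : u j = 1 := (by decide : ∀ a : ZMod 2, a ≠ 0 → a = 1) _ hj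
  refine AddChar.ne_one_iff.mpr ⟨Pi.single j 1, ?_⟩
  rw [walsh_apply, prod_eq_single j (fun i _ hi => by simp [hi]) (by simp)]
  norm_num [huj, signChar_apply, ZMod.val_one]

lemma sum_walsh (u : Fin n → ZMod 2) : ∑ v, walsh u v = if u = 0 then 2 ^ n else 0 := by
  split_ifs with hu
  · simp [hu, walsh_zero_left]
  · exact AddChar.sum_eq_zero_of_ne_one (walsh_ne_one hu)

lemma hammingNorm_eq_sum_val (u : Fin n → ZMod 2) : hammingNorm u = ∑ j, (u j).val := by
  rw [hammingNorm, card_filter]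
  exact sum_congr rfl fun j _ => (by decide : ∀ a : ZMod 2, (if a ≠ 0 then 1 else 0) = a.val) _

lemma hammingNorm_mem_range {β : Type*} [Zero β] [DecidableEq β] (v : Fin n → β) :
    hammingNorm v ∈ range (n + 1) :=
  mem_range.2 (Nat.lt_succ_of_le (hammingNorm_le_card_fintype.trans_eq (Fintype.card_fin n)))

lemma hammingDist_mem_range {β : Type*} [DecidableEq β] (x z : Fin n → β) :
    hammingDist x z ∈ range (n + 1) :=
  mem_range.2 (Nat.lt_succ_of_le (hammingDist_le_card_fintype.trans_eq (Fintype.card_fin n)))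

lemma hammingDist_eq_hammingNorm_sub {ι β : Type*} [Fintype ι] [AddCommGroup β] [DecidableEq β]
    (x z : ι → β) : hammingDist x z = hammingNorm (x - z) := by
  rw [hammingDist_comm, hammingDist_eq_hammingNorm, neg_add_eq_sub]

lemma sum_fiberwise_hammingNorm (F : (Fin n → ZMod 2) → ℝ) :
    ∑ i ∈ range (n + 1), ∑ v with hammingNorm v = i, F v = ∑ v, F v :=
  sum_fiberwise_of_maps_to (fun v _ => hammingNorm_mem_range v) F

lemma sum_signChar_mul_X_pow (b : ZMod 2) :
    ∑ a : ZMod 2, C (signChar (a * b)) * X ^ a.val = if b = 0 then 1 + X else 1 - X := by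
  rw [show (univ : Finset (ZMod 2)) = {0, 1} by decide, sum_pair zero_ne_one]
  rcases (by decide : ∀ b : ZMod 2, b = 0 ∨ b = 1) b with rfl | rfl
  · simp [ZMod.val_one]
  · simp [signChar_apply, ZMod.val_one, sub_eq_add_neg]

lemma sum_walsh_mul_X_pow_hammingNorm (v : Fin n → ZMod 2) :
    ∑ u, C (walsh u v) * X ^ hammingNorm u
      = (1 - X) ^ hammingNorm v * (1 + X) ^ (n - hammingNorm v) := by
  have hzeros : #{j | v j = 0} = n - hammingNorm v := by
    have := card_filter_add_card_filter_not (s := univ) (fun j => v j = 0)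
    rw [card_univ, Fintype.card_fin] at this
    exact Nat.eq_sub_of_add_eq this
  calc ∑ u, C (walsh u v) * X ^ hammingNorm u
      = ∑ u : Fin n → ZMod 2, ∏ j, C (signChar (u j * v j)) * X ^ (u j).val := by
        simp only [walsh_apply, map_prod, hammingNorm_eq_sum_val, prod_pow_eq_pow_sum,
          prod_mul_distrib]
    _ = ∏ j, ∑ a : ZMod 2, C (signChar (a * v j)) * X ^ a.val := by rw [Fintype.prod_sum]
    _ = ∏ j, if v j = 0 then 1 + X else 1 - X := by simp only [sum_signChar_mul_X_pow]
    _ = (1 - X) ^ hammingNorm v * (1 + X) ^ (n - hammingNorm v) := by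
      rw [prod_ite, prod_const, prod_const, hzeros, mul_comm]
      rfl

lemma coeff_one_sub_X_pow (t j : ℕ) :
    ((1 - X : ℝ[X]) ^ t).coeff j = (-1 : ℝ) ^ j * t.choose j := by
  have hexp : (1 - X : ℝ[X]) ^ t
      = ∑ m ∈ range (t + 1), C ((-1 : ℝ) ^ m * t.choose m) * X ^ m := by
    rw [sub_eq_neg_add, add_pow]
    refine sum_congr rfl fun m _ => ?_
    rw [one_pow, mul_one, neg_pow, C_mul, C_pow, C_neg, C_1, ← C_eq_natCast]
    ring
  rw [hexp, finsetSum_coeff]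
  simp only [coeff_C_mul_X_pow]
  rw [sum_ite_eq]
  split_ifs with h
  · rfl
  · rw [Nat.choose_eq_zero_of_lt (by simpa using h), Nat.cast_zero, mul_zero]

lemma krawtchouk_eq_coeff (n k t : ℕ) :
    krawtchouk n k t = ((1 - X : ℝ[X]) ^ t * (1 + X) ^ (n - t)).coeff k := by
  rw [coeff_mul, Nat.sum_antidiagonal_eq_sum_range_succ
    (fun i j => ((1 - X : ℝ[X]) ^ t).coeff i * ((1 + X) ^ (n - t)).coeff j)]
  simp only [coeff_one_sub_X_pow, coeff_one_add_X_pow, krawtchouk]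

lemma krawtchouk_zero_right (n k : ℕ) : krawtchouk n k 0 = n.choose k := by
  simp [krawtchouk, sum_range_succ']

lemma sum_walsh_hammingNorm_eq (k : ℕ) (v : Fin n → ZMod 2) :
    ∑ u with hammingNorm u = k, walsh u v = krawtchouk n k (hammingNorm v) := by
  rw [krawtchouk_eq_coeff, ← sum_walsh_mul_X_pow_hammingNorm, finsetSum_coeff, sum_filter]
  simp only [coeff_C_mul_X_pow, eq_comm]

lemma card_hammingNorm_eq (k : ℕ) : #{u : Fin n → ZMod 2 | hammingNorm u = k} = n.choose k := by
  have := sum_walsh_hammingNorm_eq k (0 : Fin n → ZMod 2)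
  simp only [AddChar.map_zero_eq_one, sum_const, nsmul_one, hammingNorm_zero,
    krawtchouk_zero_right] at this
  exact_mod_cast this

lemma choose_mul_krawtchouk_comm (i k : ℕ) :
    (n.choose k : ℝ) * krawtchouk n i k = n.choose i * krawtchouk n k i := by
  have hdouble (a b : ℕ) : ∑ u : Fin n → ZMod 2 with hammingNorm u = a,
      ∑ v : Fin n → ZMod 2 with hammingNorm v = b, walsh u v
      = n.choose a * krawtchouk n b a := by
    rw [← card_hammingNorm_eq (n := n) a, ← nsmul_eq_mul, ← sum_const]
    refine sum_congr rfl fun u hu => ?_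
    simp_rw [walsh_comm u, sum_walsh_hammingNorm_eq, (mem_filter.mp hu).2]
  rw [← hdouble, ← hdouble, sum_comm]
  simp_rw [walsh_comm]

lemma sum_comp_hammingDist (f : ℕ → ℝ) (x : Fin n → ZMod 2) :
    ∑ z, f (hammingDist x z) = ∑ i ∈ range (n + 1), n.choose i * f i := by
  calc ∑ z, f (hammingDist x z) = ∑ v : Fin n → ZMod 2, f (hammingNorm v) := by
        simp only [hammingDist_eq_hammingNorm_sub]
        exact Fintype.sum_equiv (Equiv.subLeft x) _ _ fun z => rfl
    _ = ∑ i ∈ range (n + 1), n.choose i * f i := by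
      rw [← sum_fiberwise_hammingNorm]
      refine sum_congr rfl fun i _ => ?_
      rw [sum_congr rfl fun v hv => by rw [(mem_filter.1 hv).2], sum_const, card_hammingNorm_eq,
        nsmul_eq_mul]

noncomputable def walshTransform (F : (Fin n → ZMod 2) → ℝ) (u : Fin n → ZMod 2) : ℝ :=
  ∑ v, F v * walsh u v

lemma sum_walshTransform_mul_walsh (F : (Fin n → ZMod 2) → ℝ) (x : Fin n → ZMod 2) :
    ∑ u, walshTransform F u * walsh u x = 2 ^ n * F x := by
  simp only [walshTransform, sum_mul]
  rw [sum_comm]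
  simp_rw [mul_assoc, ← mul_sum, ← walsh_sub, walsh_comm _ (_ - x), sum_walsh, sub_eq_zero]
  simp [mul_comm]

lemma walshTransform_comp_hammingNorm (f : ℕ → ℝ) (u : Fin n → ZMod 2) :
    walshTransform (f ∘ hammingNorm) u
      = ∑ i ∈ range (n + 1), f i * krawtchouk n i (hammingNorm u) := by
  rw [walshTransform, ← sum_fiberwise_hammingNorm]
  refine sum_congr rfl fun i _ => ?_
  rw [← sum_walsh_hammingNorm_eq, mul_sum]
  refine sum_congr rfl fun v hv => ?_
  rw [Function.comp_apply, (mem_filter.1 hv).2, walsh_comm]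

lemma posSemidef_of_walshTransform_nonneg (F : (Fin n → ZMod 2) → ℝ)
    (hF : ∀ u, 0 ≤ walshTransform F u) : (Matrix.of fun x z => F (x - z)).PosSemidef := by
  -- Fourier inversion: the kernel is a nonnegative combination of the rank-one `χ_u χ_uᵀ`.
  have hinv : Matrix.of (fun x z => F (x - z))
      = ∑ u, ((2 ^ n : ℝ)⁻¹ * walshTransform F u) •
          Matrix.vecMulVec (walsh u) (walsh u) := by
    ext x z
    have := sum_walshTransform_mul_walsh F (x - z)
    simp only [walsh_sub] at this
    simp only [Matrix.of_apply, Matrix.sum_apply, Matrix.smul_apply, Matrix.vecMulVec_apply,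
      smul_eq_mul, mul_assoc, ← mul_sum, this]
    field_simp
  rw [hinv]
  exact Matrix.posSemidef_sum _ fun u _ =>
    (Matrix.posSemidef_vecMulVec_self_star (walsh u)).smul (by positivity [hF u])

noncomputable def distanceDistribution (B : Matrix (Fin n → ZMod 2) (Fin n → ZMod 2) ℝ)
    (i : ℕ) : ℝ :=
  ∑ x, ∑ z with hammingDist x z = i, B x z

section distanceDistribution

variable {B : Matrix (Fin n → ZMod 2) (Fin n → ZMod 2) ℝ}

lemma sum_range_mul_distanceDistribution (g : ℕ → ℝ) :
    ∑ i ∈ range (n + 1), g i * distanceDistribution B i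
      = ∑ x, ∑ z, g (hammingDist x z) * B x z := by
  simp only [distanceDistribution, mul_sum]
  rw [sum_comm]
  refine sum_congr rfl fun x _ => ?_
  rw [← sum_fiberwise_of_maps_to (g := hammingDist x) (fun z _ => hammingDist_mem_range x z)]
  exact sum_congr rfl fun i _ => sum_congr rfl fun z hz => by rw [(mem_filter.1 hz).2]

lemma distanceDistribution_nonneg (hB : ∀ x z, 0 ≤ B x z) (i : ℕ) :
    0 ≤ distanceDistribution B i :=
  sum_nonneg fun x _ => sum_nonneg fun z _ => hB x z

lemma distanceDistribution_zero : distanceDistribution B 0 = ∑ x, B x x := by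
  simp [distanceDistribution, hammingDist_eq_zero, filter_eq]

lemma distanceDistribution_eq_zero {d : ℕ}
    (hB : ∀ x z, (hammingGraph n d).Adj x z → B x z = 0) {i : ℕ} (hi : 1 ≤ i)
    (hid : i ≤ d - 1) : distanceDistribution B i = 0 :=
  sum_eq_zero fun x _ => sum_eq_zero fun z hz =>
    hB x z (by
      change 0 < hammingDist x z ∧ hammingDist x z < d
      rw [(mem_filter.1 hz).2]
      omega)

lemma sum_distanceDistribution :
    ∑ i ∈ range (n + 1), distanceDistribution B i = ∑ x, ∑ z, B x z := by
  simpa using sum_range_mul_distanceDistribution (B := B) fun _ => 1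

lemma krawtchouk_hammingDist (k : ℕ) (x z : Fin n → ZMod 2) :
    krawtchouk n k (hammingDist x z) = ∑ u with hammingNorm u = k, walsh u x * walsh u z := by
  rw [hammingDist_eq_hammingNorm_sub, ← sum_walsh_hammingNorm_eq]
  exact sum_congr rfl fun u _ => walsh_sub u x z

lemma sum_krawtchouk_mul_distanceDistribution_nonneg (hB : B.PosSemidef) (k : ℕ) :
    0 ≤ ∑ i ∈ range (n + 1), krawtchouk n k i * distanceDistribution B i := by
  rw [sum_range_mul_distanceDistribution]
  simp only [krawtchouk_hammingDist, sum_mul]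
  rw [sum_congr rfl fun x _ => sum_comm, sum_comm]
  refine sum_nonneg fun u _ => ?_
  have := hB.dotProduct_mulVec_nonneg (walsh u)
  simp only [star_trivial, dotProduct, Matrix.mulVec, mul_sum] at this
  convert this using 3 with x _ z
  ring

end distanceDistribution

/-- Spreads `y i` evenly over the `2ⁿ C(n,i)` ordered pairs of words at distance `i`. -/
noncomputable def delsarteProfile (n : ℕ) (y : ℕ → ℝ) (i : ℕ) : ℝ :=
  y i / (2 ^ n * n.choose i)

noncomputable def delsarteMatrix (y : ℕ → ℝ) :
    Matrix (Fin n → ZMod 2) (Fin n → ZMod 2) ℝ :=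
  Matrix.of fun x z => delsarteProfile n y (hammingDist x z)

lemma cast_choose_ne_zero {i : ℕ} (hi : i ∈ range (n + 1)) : (n.choose i : ℝ) ≠ 0 :=
  Nat.cast_ne_zero.2 (Nat.choose_pos (Nat.lt_succ_iff.1 (mem_range.1 hi))).ne'

section delsarteMatrix

variable {y : ℕ → ℝ}

lemma delsarteMatrix_nonneg (hy : ∀ i, 0 ≤ y i) (x z : Fin n → ZMod 2) :
    0 ≤ delsarteMatrix y x z :=
  div_nonneg (hy _) (by positivity)

lemma sum_delsarteMatrix_diag (hy : y 0 = 1) :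
    ∑ x : Fin n → ZMod 2, delsarteMatrix y x x = 1 := by
  simp [delsarteMatrix, delsarteProfile, hy]

lemma delsarteMatrix_eq_zero {d : ℕ} (hy : ∀ i, 1 ≤ i → i ≤ d - 1 → y i = 0)
    {x z : Fin n → ZMod 2} (hxz : (hammingGraph n d).Adj x z) : delsarteMatrix y x z = 0 := by
  obtain ⟨hpos, hlt⟩ := hxz
  simp [delsarteMatrix, delsarteProfile, hy _ hpos (by omega)]

lemma sum_delsarteMatrix :
    ∑ x : Fin n → ZMod 2, ∑ z, delsarteMatrix y x z = ∑ i ∈ range (n + 1), y i := by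
  simp only [delsarteMatrix, Matrix.of_apply, sum_comp_hammingDist, sum_const, card_univ,
    Fintype.card_fun, ZMod.card, Fintype.card_fin, nsmul_eq_mul, mul_sum]
  refine sum_congr rfl fun i hi => ?_
  have := cast_choose_ne_zero hi
  simp only [delsarteProfile, Nat.cast_pow, Nat.cast_ofNat]
  field_simp

lemma posSemidef_delsarteMatrix
    (hy : ∀ k ≤ n, 0 ≤ ∑ i ∈ range (n + 1), krawtchouk n k i * y i) :
    (delsarteMatrix (n := n) y).PosSemidef := by
  have hsub : delsarteMatrix y
      = Matrix.of fun x z : Fin n → ZMod 2 => (delsarteProfile n y ∘ hammingNorm) (x - z) := by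
    ext x z
    simp [delsarteMatrix, hammingDist_eq_hammingNorm_sub]
  rw [hsub]
  refine posSemidef_of_walshTransform_nonneg _ fun u => ?_
  set k := hammingNorm u
  have hk : k ≤ n := hammingNorm_le_card_fintype.trans_eq (Fintype.card_fin n)
  refine (mul_nonneg_iff_of_pos_left (by exact_mod_cast Nat.choose_pos hk :
    (0 : ℝ) < n.choose k)).1 ?_
  calc 0 ≤ ((2 : ℝ) ^ n)⁻¹ * ∑ i ∈ range (n + 1), krawtchouk n k i * y i :=
        mul_nonneg (by positivity) (hy k hk)
    _ = n.choose k * walshTransform (delsarteProfile n y ∘ hammingNorm) u := by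
      rw [walshTransform_comp_hammingNorm, mul_sum, mul_sum]
      refine sum_congr rfl fun i hi => ?_
      have := cast_choose_ne_zero hi
      rw [delsarteProfile, mul_left_comm (n.choose k : ℝ), choose_mul_krawtchouk_comm]
      field_simp

end delsarteMatrix

end HammingSpace

theorem lovaszThetaPrime_hammingGraph_eq_delsarteLP_general (n d : ℕ) :
    lovaszThetaPrime (hammingGraph n d) = delsarteLP n d := by
  unfold lovaszThetaPrime delsarteLP
  congr 1
  ext s
  constructor
  · rintro ⟨B, hB, hB0, htr, hadj, rfl⟩
    exact ⟨distanceDistribution B, distanceDistribution_nonneg hB0,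
      distanceDistribution_zero.trans htr, fun _ => distanceDistribution_eq_zero hadj,
      fun k _ => sum_krawtchouk_mul_distanceDistribution_nonneg hB k,
      sum_distanceDistribution.symm⟩
  · rintro ⟨y, hy0, hy1, hyd, hK, rfl⟩
    exact ⟨delsarteMatrix y, posSemidef_delsarteMatrix hK, delsarteMatrix_nonneg hy0,
      sum_delsarteMatrix_diag hy1, fun _ _ => delsarteMatrix_eq_zero hyd,
      sum_delsarteMatrix.symm⟩

/-- The symmetrized modified theta number of the Hamming graph coincides with the
optimal value of Delsarte's linear program: `ϑ'(Γ(n,d)) = LP(n,d)`. -/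
theorem lovaszThetaPrime_hammingGraph_eq_delsarteLP (n d : ℕ) (hd : 1 ≤ d) :
    lovaszThetaPrime (hammingGraph n d) = delsarteLP n d :=
  lovaszThetaPrime_hammingGraph_eq_delsarteLP_general n d
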